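/- Let k ≥ 2, z ∈ ℂ, and define the spherical function φ_z : F_k → ℂ by φ_z(x) = p_{|x|}(z)/e_{|x|}. Then φ_z ∗ (χ_1/(2k)) = (z/(2k))·φ_z; equivalently, ∑_{y ∈ E_1} φ_z(xy) = z·φ_z(x) for all x ∈ F_k. -/

import Mathlib

/-!
`φ_z` depends only on the word length, which is invariant under inversion, so the sum of `φ_z`
over the right neighbours `x y` of `x` equals the sum over the left neighbours `y w` of
`w = x⁻¹`. If `w ≠ 1` has reduced word `b :: tl`, exactly one letter cancels against `b` and the
other `2k - 1` lengthen the word, so with `f n = p_n(z) / e_n` and `n = |w|` the identity reads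
`f (n - 1) + (2k - 1) f (n + 1) = z f n`: the three-term recursion of the `p_n` divided by
`e_{n+1} = (2k - 1) e_n`. For `w = 1` all `2k` neighbours have length one and it reads
`2k f 1 = z`.
-/

/-- The sphere of radius `n` about the identity in the free group `F_k`:
the finite set of elements of reduced word length `n`. -/
noncomputable def sphere (k n : ℕ) : Finset (FreeGroup (Fin k)) :=
  (Set.Finite.preimage (Function.Injective.injOn FreeGroup.toWord_injective)
    (List.finite_length_eq ((Fin k) × Bool) n)).toFinset

/-- `χ_n = ∑_{|x| = n} x`, the sum of the sphere of radius `n` in `ℂ[F_k]`. -/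
noncomputable def chi (k n : ℕ) : MonoidAlgebra ℂ (FreeGroup (Fin k)) :=
  ∑ x ∈ sphere k n, MonoidAlgebra.of ℂ (FreeGroup (Fin k)) x

/-- The polynomials `p_0 = 1`, `p_1 = z`, `p_2 = z² - 2k`,
`p_{n+1} = z p_n - (2k-1) p_{n-1}` for `n ≥ 2`. -/
noncomputable def p (k : ℕ) : ℕ → Polynomial ℂ
  | 0 => 1
  | 1 => Polynomial.X
  | 2 => Polynomial.X ^ 2 - Polynomial.C ((2 * k : ℕ) : ℂ)
  | (n + 3) => Polynomial.X * p k (n + 2) - Polynomial.C ((2 * k - 1 : ℕ) : ℂ) * p k (n + 1)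

/-- `e_0 = 1` and `e_n = 2k(2k-1)^{n-1}` for `n ≥ 1`, the cardinality of the sphere. -/
def eN (k n : ℕ) : ℕ := if n = 0 then 1 else 2 * k * (2 * k - 1) ^ (n - 1)

/-- The spherical function `φ_z(x) = p_{|x|}(z)/e_{|x|}`. -/
noncomputable def phiz (k : ℕ) (z : ℂ) : FreeGroup (Fin k) → ℂ :=
  fun x => (p k x.toWord.length).eval z / (eN k x.toWord.length : ℂ)

namespace FreeGroup

variable {α : Type*} [DecidableEq α]

theorem toWord_mk_singleton (a : α × Bool) : (mk [a]).toWord = [a] := by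
  rw [toWord_mk, reduce_singleton]

theorem norm_mk_singleton_mul_of_toWord_eq_cons {w : FreeGroup α} {b : α × Bool}
    {tl : List (α × Bool)} (h : w.toWord = b :: tl) (a : α × Bool) :
    norm (mk [a] * w) = if a = (b.1, !b.2) then tl.length else tl.length + 2 := by
  rw [← mk_toWord (x := w), mul_mk, norm, toWord_mk, List.singleton_append, reduce.cons,
    reduce_toWord, h]
  by_cases ha : a = (b.1, !b.2)
  · simp [ha]
  · simp [ha, Prod.ext_iff.not.1 ha]

theorem sum_norm_mk_singleton_mul_of_toWord_eq_cons [Fintype α] {M : Type*} [AddCommMonoid M]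
    (g : ℕ → M) {w : FreeGroup α} {b : α × Bool} {tl : List (α × Bool)} (h : w.toWord = b :: tl) :
    ∑ a : α × Bool, g (norm (mk [a] * w)) =
      g tl.length + (2 * Fintype.card α - 1) • g (tl.length + 2) := by
  simp only [norm_mk_singleton_mul_of_toWord_eq_cons h, apply_ite g]
  rw [Fintype.sum_eq_add_sum_compl (b.1, !b.2), if_pos rfl,
    Finset.sum_congr rfl fun a ha => if_neg (Finset.mem_compl.1 ha <| Finset.mem_singleton.2 ·),
    Finset.sum_const, Finset.card_compl, Finset.card_singleton, Fintype.card_prod,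
    Fintype.card_bool, mul_comm]

end FreeGroup

theorem mem_sphere_iff {k n : ℕ} {x : FreeGroup (Fin k)} : x ∈ sphere k n ↔ x.norm = n := by
  simp [sphere, FreeGroup.norm]

theorem sum_sphere_inv {M : Type*} [AddCommMonoid M] (k n : ℕ) (F : FreeGroup (Fin k) → M) :
    ∑ y ∈ sphere k n, F y⁻¹ = ∑ y ∈ sphere k n, F y :=
  Finset.sum_nbij' (·⁻¹) (·⁻¹) (by simp [mem_sphere_iff]) (by simp [mem_sphere_iff])
    (by simp) (by simp) (by simp)

theorem sum_sphere_one {M : Type*} [AddCommMonoid M] (k : ℕ) (F : FreeGroup (Fin k) → M) :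
    ∑ y ∈ sphere k 1, F y = ∑ a : Fin k × Bool, F (FreeGroup.mk [a]) := by
  have hinj : Function.Injective fun a : Fin k × Bool => FreeGroup.mk [a] := fun a b h => by
    simpa [FreeGroup.toWord_mk_singleton] using congrArg FreeGroup.toWord h
  have hsphere : sphere k 1 = Finset.univ.image fun a : Fin k × Bool => FreeGroup.mk [a] := by
    ext x
    simp only [mem_sphere_iff, FreeGroup.norm, List.length_eq_one_iff, Finset.mem_image,
      Finset.mem_univ, true_and]
    constructor
    · rintro ⟨a, ha⟩
      exact ⟨a, by rw [← ha, FreeGroup.mk_toWord]⟩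
    · rintro ⟨a, rfl⟩
      exact ⟨a, FreeGroup.toWord_mk_singleton a⟩
  rw [hsphere, Finset.sum_image fun a _ b _ h => hinj h]

noncomputable def sphericalCoeff (k : ℕ) (z : ℂ) (n : ℕ) : ℂ :=
  (p k n).eval z / (eN k n : ℂ)

theorem phiz_eq_sphericalCoeff (k : ℕ) (z : ℂ) (x : FreeGroup (Fin k)) :
    phiz k z x = sphericalCoeff k z x.norm :=
  rfl

theorem eN_zero (k : ℕ) : eN k 0 = 1 :=
  rfl

theorem eN_one (k : ℕ) : eN k 1 = 2 * k := by
  simp [eN]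

theorem eN_add_two (k n : ℕ) : eN k (n + 2) = (2 * k - 1) * eN k (n + 1) := by
  rw [eN, eN, if_neg (by omega), if_neg (by omega), show n + 2 - 1 = n + 1 by omega,
    Nat.add_sub_cancel, pow_succ]
  ring

theorem eN_ne_zero {k : ℕ} (hk : k ≠ 0) (n : ℕ) : eN k n ≠ 0 := by
  unfold eN
  split_ifs
  · exact one_ne_zero
  · exact mul_ne_zero (by omega) (pow_ne_zero _ (by omega))

theorem p_add_three (k n : ℕ) :
    p k (n + 3) = Polynomial.X * p k (n + 2) - Polynomial.C ((2 * k - 1 : ℕ) : ℂ) * p k (n + 1) :=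
  rfl

theorem two_mul_sphericalCoeff_one {k : ℕ} (hk : k ≠ 0) (z : ℂ) :
    (2 * k : ℕ) * sphericalCoeff k z 1 = z * sphericalCoeff k z 0 := by
  have h2k : ((2 * k : ℕ) : ℂ) ≠ 0 := by exact_mod_cast (by omega : 2 * k ≠ 0)
  rw [sphericalCoeff, sphericalCoeff, eN_zero, eN_one, p, p, Polynomial.eval_X,
    Polynomial.eval_one, Nat.cast_one, div_one]
  field_simp

theorem sphericalCoeff_add_mul_sphericalCoeff {k : ℕ} (hk : k ≠ 0) (z : ℂ) (n : ℕ) :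
    sphericalCoeff k z n + (2 * k - 1 : ℕ) * sphericalCoeff k z (n + 2) =
      z * sphericalCoeff k z (n + 1) := by
  have hq : ((2 * k - 1 : ℕ) : ℂ) ≠ 0 := by exact_mod_cast (by omega : 2 * k - 1 ≠ 0)
  rcases n with _ | m
  · have hk' : (k : ℂ) ≠ 0 := Nat.cast_ne_zero.2 hk
    have he2 : eN k 2 = (2 * k - 1) * (2 * k) := by
      rw [eN_add_two k 0, zero_add, eN_one]
    simp only [zero_add, sphericalCoeff, p, eN_zero, eN_one, he2, Polynomial.eval_one,
      Polynomial.eval_X, Polynomial.eval_sub, Polynomial.eval_pow, Polynomial.eval_C, Nat.cast_mul]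
    field_simp
    ring
  · simp only [sphericalCoeff, p_add_three, eN_add_two, Polynomial.eval_sub, Polynomial.eval_mul,
      Polynomial.eval_X, Polynomial.eval_C, Nat.cast_mul]
    have he : (eN k (m + 1) : ℂ) ≠ 0 := Nat.cast_ne_zero.2 (eN_ne_zero hk _)
    field_simp
    ring

theorem sum_sphericalCoeff_norm_mk_singleton_mul {k : ℕ} (hk : k ≠ 0) (z : ℂ)
    (w : FreeGroup (Fin k)) :
    ∑ a : Fin k × Bool, sphericalCoeff k z (FreeGroup.mk [a] * w).norm =
      z * sphericalCoeff k z w.norm := by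
  rcases h : w.toWord with _ | ⟨b, tl⟩
  · have hnorm (a : Fin k × Bool) : (FreeGroup.mk [a]).norm = 1 := by
      rw [FreeGroup.norm, FreeGroup.toWord_mk_singleton, List.length_singleton]
    rw [FreeGroup.toWord_eq_nil_iff.1 h, FreeGroup.norm_one]
    simp only [mul_one, hnorm, Finset.sum_const, Finset.card_univ, Fintype.card_prod,
      Fintype.card_fin, Fintype.card_bool, nsmul_eq_mul, mul_comm k]
    exact two_mul_sphericalCoeff_one hk z
  · rw [FreeGroup.sum_norm_mk_singleton_mul_of_toWord_eq_cons _ h, nsmul_eq_mul, Fintype.card_fin,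
      FreeGroup.norm, h, List.length_cons]
    exact sphericalCoeff_add_mul_sphericalCoeff hk z tl.length

/-- `∑_{y ∈ E_1} φ_z(xy) = z·φ_z(x)` for all `x ∈ F_k`,
i.e. `φ_z ∗ (χ_1/(2k)) = (z/(2k))·φ_z`. -/
theorem stmt13 (k : ℕ) (hk : 2 ≤ k) (z : ℂ) :
    ∀ x : FreeGroup (Fin k), ∑ y ∈ sphere k 1, phiz k z (x * y) = z * phiz k z x := by
  intro x
  calc ∑ y ∈ sphere k 1, phiz k z (x * y)
      = ∑ y ∈ sphere k 1, sphericalCoeff k z (y⁻¹ * x⁻¹).norm := by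
        simp only [phiz_eq_sphericalCoeff, ← mul_inv_rev, FreeGroup.norm_inv_eq]
    _ = ∑ a : Fin k × Bool, sphericalCoeff k z (FreeGroup.mk [a] * x⁻¹).norm := by
        rw [sum_sphere_inv k 1 fun y => sphericalCoeff k z (y * x⁻¹).norm, sum_sphere_one]
    _ = z * phiz k z x := by
        rw [sum_sphericalCoeff_norm_mk_singleton_mul (by omega), FreeGroup.norm_inv_eq,
          phiz_eq_sphericalCoeff]
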